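/- arXiv:1701.03624 — 3 statements merged into one kernel-verified Lean document; each statement's English description precedes it below -/
import Mathlib

section
/- Let V be a finite-dimensional F₂-representation of Γ_Δ = C₃ ⋊ C₄ and let U ≤ V be a Γ_Δ-subrepresentation which, as a representation of the subgroup C₄, is isomorphic to a direct sum of k ≥ 1 copies of the regular representation F₂[C₄]. Then U is a direct summand of V as a Γ_Δ-representation. -/
/-!
Since `R₄ = F₂[X]/((X+1)⁴)` is a quotient of a principal ideal domain by a nonzero element, it is
self-injective, so the free `R₄`-module `U` is injective and admits an `R₄`-linear, i.e.
`b`-equivariant, retraction `π : V → U`. Conjugating by the coset representatives `1, c, c²` of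
`⟨b⟩` and adding gives `π + c π c² + c² π c`, which is still `b`-equivariant because `⟨c⟩` is
normalised by `b`, is `c`-equivariant because `c³ = 1`, and restricts to `3 = 1` on `U`. Its kernel
is the required complement.
-/

open Polynomial

set_option synthInstance.maxHeartbeats 400000

/-- Relations for `Γ_Δ = C₃ ⋊ C₄ = ⟨c, b | c³ = 1, b⁴ = 1, bc = c²b⟩`,
generators `c = of 0`, `b = of 1`. -/
def sdRels : Set (FreeGroup (Fin 2)) :=
  {FreeGroup.of 0 ^ 3, FreeGroup.of 1 ^ 4,
   FreeGroup.of 1 * FreeGroup.of 0 * (FreeGroup.of 0 ^ 2 * FreeGroup.of 1)⁻¹}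

/-- `R₄ = F₂[b]/(b+1)⁴ = F₂[C₄]`, the regular representation of `C₄` over `F₂`. -/
noncomputable abbrev R4 : Type :=
  (ZMod 2)[X] ⧸ Ideal.span {((X : (ZMod 2)[X]) + 1) ^ 4}

/-- The class of `b` in `R₄`. -/
noncomputable def bbar : R4 :=
  Ideal.Quotient.mk (Ideal.span {((X : (ZMod 2)[X]) + 1) ^ 4}) X

theorem Ideal.Quotient.baer_span_singleton {R : Type*} [CommRing R] [IsDomain R]
    [IsPrincipalIdealRing R] {a : R} (ha : a ≠ 0) :
    Module.Baer (R ⧸ Ideal.span {a}) (R ⧸ Ideal.span {a}) := by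
  intro I g
  set q := Ideal.Quotient.mk (Ideal.span {a})
  obtain ⟨d, hd⟩ := (IsPrincipalIdealRing.principal (I.comap q)).principal
  rw [Ideal.submodule_span_eq] at hd
  have hI : I = Ideal.span {q d} := by
    rw [← Ideal.map_comap_of_surjective q Ideal.Quotient.mk_surjective I, hd, Ideal.map_span,
      Set.image_singleton]
  subst hI
  obtain ⟨c, hc⟩ : d ∣ a := by
    rw [← Ideal.mem_span_singleton, ← hd, Ideal.mem_comap, Ideal.Quotient.eq_zero_iff_mem.mpr
      (Ideal.mem_span_singleton_self a)]
    exact Ideal.zero_mem _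
  have hgen : q d ∈ Ideal.span {q d} := Ideal.mem_span_singleton_self _
  obtain ⟨r, hr⟩ : ∃ r, q r = g ⟨q d, hgen⟩ := Ideal.Quotient.mk_surjective _
  -- `c • (q d) = q a = 0` forces `c * r ∈ (a) = (d * c)`, and `c ≠ 0` since `a ≠ 0`.
  obtain ⟨y, rfl⟩ : d ∣ r := by
    have hcr : q (c * r) = 0 := by
      rw [map_mul, hr, ← smul_eq_mul, ← map_smul]
      convert map_zero g
      ext
      simp [q, ← map_mul, mul_comm c d, ← hc]
    rw [Ideal.Quotient.eq_zero_iff_mem, Ideal.mem_span_singleton, hc, mul_comm d c] at hcr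
    exact (mul_dvd_mul_iff_left (right_ne_zero_of_mul (hc ▸ ha))).mp hcr
  refine ⟨LinearMap.toSpanSingleton _ _ (q y), fun x hx => ?_⟩
  obtain ⟨s, rfl⟩ := Ideal.mem_span_singleton'.mp hx
  have hsmul : (⟨s * q d, hx⟩ : Ideal.span {q d}) = s • ⟨q d, hgen⟩ := rfl
  rw [hsmul, map_smul, ← hr]
  simp [mul_assoc]

theorem LinearMap.comp_aeval_eq_aeval_comp {K M N : Type*} [CommRing K] [AddCommGroup M]
    [AddCommGroup N] [Module K M] [Module K N] {T : M →ₗ[K] N} {f : Module.End K M}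
    {g : Module.End K N} (h : T ∘ₗ f = g ∘ₗ T) (q : K[X]) :
    T ∘ₗ aeval f q = aeval g q ∘ₗ T := by
  induction q using Polynomial.induction_on' with
  | add q r hq hr => simp only [map_add, LinearMap.comp_add, LinearMap.add_comp, hq, hr]
  | monomial n c =>
    simp only [aeval_monomial, Module.End.mul_eq_comp, Module.algebraMap_end_eq_smul_id,
      LinearMap.comp_smul, LinearMap.smul_comp, LinearMap.id_comp]
    congr 1
    induction n with
    | zero => rfl
    | succ n ih => rw [pow_succ, pow_succ, Module.End.mul_eq_comp, Module.End.mul_eq_comp,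
        ← LinearMap.comp_assoc, ih, LinearMap.comp_assoc, h, LinearMap.comp_assoc]

theorem LinearMap.map_mk_smul_eq_aeval {K V ι : Type*} [CommRing K] [AddCommGroup V]
    [Module K V] {p : K[X]} {β : Module.End K V} (T : (ι → K[X] ⧸ Ideal.span {p}) →ₗ[K] V)
    (hT : ∀ x, T (Ideal.Quotient.mk (Ideal.span {p}) X • x) = β (T x)) (q : K[X])
    (x : ι → K[X] ⧸ Ideal.span {p}) :
    T (Ideal.Quotient.mk (Ideal.span {p}) q • x) = aeval β q (T x) := by
  have hX : T ∘ₗ Algebra.lsmul K K _ (Ideal.Quotient.mk (Ideal.span {p}) X) = β ∘ₗ T :=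
    LinearMap.ext hT
  have hq : aeval (Ideal.Quotient.mk (Ideal.span {p}) X) q = Ideal.Quotient.mk _ q := by
    rw [← Ideal.Quotient.mkₐ_eq_mk K, aeval_algHom_apply, aeval_X_left_apply]
  have := LinearMap.congr_fun (LinearMap.comp_aeval_eq_aeval_comp hX q) x
  rwa [aeval_algHom_apply, hq] at this

theorem Submodule.exists_commute_retraction_of_linearEquiv_pi {K V ι : Type*} [Field K]
    [AddCommGroup V] [Module K V] {p : K[X]} (hp : p ≠ 0) {β : Module.End K V}
    (hβ : aeval β p = 0) (U : Submodule K V) (hU : ∀ v ∈ U, β v ∈ U)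
    (e : U ≃ₗ[K] (ι → K[X] ⧸ Ideal.span {p}))
    (he : ∀ u : U, e ⟨β u, hU u u.2⟩ = Ideal.Quotient.mk (Ideal.span {p}) X • e u) :
    ∃ π : Module.End K V, Commute β π ∧ (∀ v, π v ∈ U) ∧ ∀ u ∈ U, π u = u := by
  let A := K[X] ⧸ Ideal.span {p}
  let φ : A →ₐ[K] Module.End K V := Ideal.Quotient.liftₐ _ (aeval β) fun q hq => by
    obtain ⟨r, rfl⟩ := Ideal.mem_span_singleton'.mp hq
    rw [map_mul, hβ, mul_zero]
  have hφ (q : K[X]) : φ (Ideal.Quotient.mk _ q) = aeval β q := Ideal.Quotient.lift_mk _ _ _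
  let : Module A V := Module.compHom V φ.toRingHom
  have : IsScalarTower K A V := ⟨fun c a v => by
    show φ (c • a) v = c • φ a v
    rw [map_smul, LinearMap.smul_apply]⟩
  have : Module.Injective A A := (Ideal.Quotient.baer_span_singleton hp).injective
  let T : (ι → A) →ₗ[K] V := U.subtype ∘ₗ e.symm.toLinearMap
  have hTX (x : ι → A) : T (Ideal.Quotient.mk (Ideal.span {p}) X • x) = β (T x) := by
    have hx := he (e.symm x)
    rw [e.apply_symm_apply, ← e.eq_symm_apply] at hx
    exact congrArg Subtype.val hx.symm
  let TA : (ι → A) →ₗ[A] V :=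
    { T with
      map_smul' := fun a x => by
        obtain ⟨q, rfl⟩ := Ideal.Quotient.mk_surjective a
        exact (LinearMap.map_mk_smul_eq_aeval T hTX q x).trans (by rw [← hφ]; rfl) }
  obtain ⟨h, hh⟩ := Module.Injective.extension_property A (ι → A) _ _ TA
    (U.injective_subtype.comp e.symm.injective) LinearMap.id
  refine ⟨(TA ∘ₗ h).restrictScalars K, ?_, fun v => (e.symm (h v)).2, fun u hu => ?_⟩
  · ext v
    have hβφ : β = φ (Ideal.Quotient.mk _ X) := by rw [hφ, aeval_X]
    simp only [Module.End.mul_apply, LinearMap.restrictScalars_apply, LinearMap.comp_apply]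
    rw [hβφ]
    exact ((TA ∘ₗ h).map_smul (Ideal.Quotient.mk _ X) v).symm
  · have hTu : T (e ⟨u, hu⟩) = u := by simp [T]
    rw [← hTu]
    exact congrArg T (LinearMap.congr_fun hh _)

theorem aeval_X_add_one_pow_four_eq_zero {A : Type*} [Ring A] [Algebra (ZMod 2) A] {β : A}
    (h : β ^ 4 = 1) : aeval β ((X + 1) ^ 4 : (ZMod 2)[X]) = 0 := by
  have hfrob : ((X + 1) ^ 4 : (ZMod 2)[X]) = X ^ 4 + 1 := by
    simpa using add_pow_char_pow (R := (ZMod 2)[X]) (p := 2) (n := 2) X 1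
  rw [hfrob, map_add, map_pow, aeval_X, map_one, h, ← map_one (algebraMap (ZMod 2) A),
    ← map_add, show (1 + 1 : ZMod 2) = 0 from rfl, map_zero]

section CubicAverage

variable {A : Type*} [Ring A]

/-- For `γ ^ 3 = 1` this is `∑ i < 3, γ ^ i * π * γ⁻ⁱ`. -/
def cubicAverage (γ π : A) : A := π + γ * π * γ ^ 2 + γ ^ 2 * π * γ

theorem commute_cubicAverage {γ : A} (hγ : γ ^ 3 = 1) (π : A) :
    Commute γ (cubicAverage γ π) :=
  calc γ * cubicAverage γ π = γ * π + γ ^ 2 * π * γ ^ 2 + γ ^ 3 * π * γ := by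
        unfold cubicAverage; noncomm_ring
    _ = π * γ + γ * π * γ ^ 3 + γ ^ 2 * π * γ ^ 2 := by rw [hγ]; noncomm_ring
    _ = cubicAverage γ π * γ := by unfold cubicAverage; noncomm_ring

theorem Commute.cubicAverage {β γ π : A} (hγ : γ ^ 3 = 1) (hβγ : β * γ = γ ^ 2 * β)
    (hβπ : Commute β π) : Commute β (cubicAverage γ π) := by
  have hβγ2 : β * γ ^ 2 = γ * β :=
    calc β * γ ^ 2 = γ ^ 3 * γ * β := by
          rw [pow_two, ← mul_assoc, hβγ, mul_assoc, hβγ]; noncomm_ring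
      _ = γ * β := by rw [hγ, one_mul]
  calc β * _root_.cubicAverage γ π
      = β * π + β * γ * π * γ ^ 2 + β * γ ^ 2 * π * γ := by
        unfold _root_.cubicAverage; noncomm_ring
    _ = β * π + γ ^ 2 * (β * π) * γ ^ 2 + γ * (β * π) * γ := by
        rw [hβγ, hβγ2]; noncomm_ring
    _ = π * β + γ ^ 2 * (π * β) * γ ^ 2 + γ * (π * β) * γ := by rw [hβπ.eq]
    _ = π * β + γ ^ 2 * π * (β * γ ^ 2) + γ * π * (β * γ) := by noncomm_ring
    _ = _root_.cubicAverage γ π * β := by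
        rw [hβγ, hβγ2]; unfold _root_.cubicAverage; noncomm_ring

variable {K V : Type*} [Semiring K] [AddCommGroup V] [Module K V] {U : Submodule K V}
  {γ π : Module.End K V}

theorem cubicAverage_apply_mem (hγU : ∀ v ∈ U, γ v ∈ U) (hπU : ∀ v, π v ∈ U) (v : V) :
    cubicAverage γ π v ∈ U := by
  simp only [cubicAverage, LinearMap.add_apply, Module.End.mul_apply, pow_two]
  exact U.add_mem (U.add_mem (hπU v) (hγU _ (hπU _))) (hγU _ (hγU _ (hπU _)))

theorem cubicAverage_apply_of_mem (hγ : γ ^ 3 = 1) (hγU : ∀ v ∈ U, γ v ∈ U)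
    (hπ : ∀ u ∈ U, π u = u) {u : V} (hu : u ∈ U) : cubicAverage γ π u = 3 • u := by
  have hγ3 (v : V) : γ (γ (γ v)) = v := by
    simpa [pow_succ] using LinearMap.congr_fun hγ v
  simp only [cubicAverage, LinearMap.add_apply, Module.End.mul_apply, pow_two]
  rw [hπ u hu, hπ _ (hγU _ (hγU _ hu)), hπ _ (hγU _ hu), hγ3, succ_nsmul, two_nsmul]

end CubicAverage

theorem Representation.commute_of_closure_eq_top {k G V : Type*} [CommSemiring k] [Group G]
    [AddCommMonoid V] [Module k V] (ρ : Representation k G V) {S : Set G}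
    (hS : Subgroup.closure S = ⊤) {f : Module.End k V} (hf : ∀ s ∈ S, Commute (ρ s) f) (g : G) :
    Commute (ρ g) f := by
  induction (hS ▸ Subgroup.mem_top g : g ∈ Subgroup.closure S) using Subgroup.closure_induction with
  | mem s hs => exact hf s hs
  | one => simp
  | mul x y _ _ hx hy => simpa using hx.mul_left hy
  | inv x _ hx =>
    rw [← ρ.asGroupHom_apply] at hx ⊢
    rw [map_inv]
    exact hx.units_inv_left

theorem sdRels_of_zero_pow_three : (PresentedGroup.of 0 : PresentedGroup sdRels) ^ 3 = 1 := by
  rw [PresentedGroup.of, ← map_pow]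
  exact PresentedGroup.one_of_mem (by simp [sdRels])

theorem sdRels_of_one_pow_four : (PresentedGroup.of 1 : PresentedGroup sdRels) ^ 4 = 1 := by
  rw [PresentedGroup.of, ← map_pow]
  exact PresentedGroup.one_of_mem (by simp [sdRels])

theorem sdRels_of_one_mul_of_zero : (PresentedGroup.of 1 : PresentedGroup sdRels) *
    PresentedGroup.of 0 = PresentedGroup.of 0 ^ 2 * PresentedGroup.of 1 := by
  simp only [PresentedGroup.of, ← map_pow, ← map_mul]
  exact PresentedGroup.mk_eq_mk_of_mul_inv_mem (by simp [sdRels])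

theorem stmt_7_general (V : Type) [AddCommGroup V] [Module (ZMod 2) V]
    (ρ : Representation (ZMod 2) (PresentedGroup sdRels) V)
    (U : Submodule (ZMod 2) V) (hU : ∀ g, ∀ v ∈ U, ρ g v ∈ U)
    (k : ℕ)
    (e : U ≃ₗ[ZMod 2] (Fin k → R4))
    (he : ∀ u : U,
      e ⟨ρ (PresentedGroup.of 1) u.1, hU (PresentedGroup.of 1) u.1 u.2⟩ =
        fun i => bbar * e u i) :
    ∃ W : Submodule (ZMod 2) V,
      (∀ g, ∀ v ∈ W, ρ g v ∈ W) ∧ IsCompl U W := by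
  set γ := ρ (PresentedGroup.of 0)
  set β := ρ (PresentedGroup.of 1)
  have hγ : γ ^ 3 = 1 := by rw [← map_pow, sdRels_of_zero_pow_three, map_one]
  have hβγ : β * γ = γ ^ 2 * β := by rw [← map_mul, sdRels_of_one_mul_of_zero, map_mul, map_pow]
  have hβ : aeval β ((X + 1) ^ 4 : (ZMod 2)[X]) = 0 :=
    aeval_X_add_one_pow_four_eq_zero (by rw [← map_pow, sdRels_of_one_pow_four, map_one])
  obtain ⟨π, hβπ, hπU, hπ⟩ := U.exists_commute_retraction_of_linearEquiv_pi
    (pow_ne_zero 4 (X_add_C_ne_zero 1)) hβ (hU _) e he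
  set P := cubicAverage γ π
  have hPU : ∀ v, P v ∈ U := cubicAverage_apply_mem (hU _) hπU
  have hP (u : U) : P.codRestrict U hPU u = u := by
    ext
    rw [LinearMap.codRestrict_apply, cubicAverage_apply_of_mem hγ (hU _) hπ u.2,
      ← Nat.cast_smul_eq_nsmul (ZMod 2)]
    exact one_smul _ _
  have hρP : ∀ g, Commute (ρ g) P := by
    refine ρ.commute_of_closure_eq_top (PresentedGroup.closure_range_of _) ?_
    rintro _ ⟨i, rfl⟩
    fin_cases i
    exacts [commute_cubicAverage hγ π, hβπ.cubicAverage hγ hβγ]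
  refine ⟨LinearMap.ker P, fun g v hv => ?_, by simpa using LinearMap.isCompl_of_proj hP⟩
  rw [LinearMap.mem_ker] at hv ⊢
  rw [← Module.End.mul_apply, ← (hρP g).eq, Module.End.mul_apply, hv, map_zero]

/-- If `V` is a finite-dimensional `F₂`-representation of `Γ_Δ = C₃ ⋊ C₄` and
`U ≤ V` is a `Γ_Δ`-subrepresentation which, as a representation of `C₄ = ⟨b⟩`,
is isomorphic to `F₂[C₄]^{⊕k}` with `k ≥ 1`, then `U` is a direct summand of `V`
as a `Γ_Δ`-representation. -/
theorem stmt_7 (V : Type) [AddCommGroup V] [Module (ZMod 2) V]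
    [FiniteDimensional (ZMod 2) V]
    (ρ : Representation (ZMod 2) (PresentedGroup sdRels) V)
    (U : Submodule (ZMod 2) V) (hU : ∀ g, ∀ v ∈ U, ρ g v ∈ U)
    (k : ℕ) (hk : 1 ≤ k)
    (e : U ≃ₗ[ZMod 2] (Fin k → R4))
    (he : ∀ u : U,
      e ⟨ρ (PresentedGroup.of 1) u.1, hU (PresentedGroup.of 1) u.1 u.2⟩ =
        fun i => bbar * e u i) :
    ∃ W : Submodule (ZMod 2) V,
      (∀ g, ∀ v ∈ W, ρ g v ∈ W) ∧ IsCompl U W :=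
  stmt_7_general V ρ U hU k e he
end

section
/- The 8-dimensional F₂-representation U₈ = F₄ ⊕ F₄x ⊕ F₄x² ⊕ F₄x³ of Γ_Δ, where c acts diagonally by multiplication by a primitive cube root of unity and b acts as the cyclic permutation (1, x, x², x³), decomposes as U₈ ≅ U₄ ⊕ U₄. -/
/-!
`U₈` is generated by `1` as an `F₄`-module with a semilinear action of `b`, which permutes the
summands `F₄xⁱ` cyclically. So an equivariant map out of `U₈` is determined by the image of `1`,
and `1 ↦ (x, c x)` forces `xⁱ ↦ bⁱ (x, c x)`. These four vectors form an `F₄`-basis of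
`U₄ ⊕ U₄`, and `b⁴ (x, c x) = (x, c x)`, so the extension is well defined and bijective.
All of this only uses that `c` is a root of `1 + X + X²` in a ring of characteristic `2`.
-/

open Polynomial

set_option synthInstance.maxHeartbeats 400000

/-- `F₄ = F₂[c]/(1 + c + c²)`, the field with four elements. -/
noncomputable abbrev F4 : Type :=
  (ZMod 2)[X] ⧸ Ideal.span {(1 + X + X ^ 2 : (ZMod 2)[X])}

/-- The class of `c` in `F₄` (a primitive cube root of unity). -/
noncomputable def gam : F4 :=
  Ideal.Quotient.mk (Ideal.span {(1 + X + X ^ 2 : (ZMod 2)[X])}) X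

section U4Pair

variable {R : Type*} [CommRing R]

def b8 (u : Fin 4 → R) : Fin 4 → R := ![u 3 ^ 2, u 0 ^ 2, u 1 ^ 2, u 2 ^ 2]

def b4 (ω : R) (v : R × R) : R × R := (v.1 ^ 2 + v.2 ^ 2, ω * v.2 ^ 2)

/- The `i`-th basis vector goes to `bⁱ (x, ω x)`, where `b = Prod.map (b4 ω) (b4 ω)` and
`x = (0, 1)`, once `ω ^ 2 + ω + 1 = 0` and `2 = 0`. -/
def toU4Pair (ω : R) : (Fin 4 → R) →ₗ[R] (R × R) × (R × R) where
  toFun u := ((u 1 + ω * u 2 + ω * u 3, u 0 + ω * u 1 + u 2 + ω * u 3),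
    (ω ^ 2 * u 1 + ω ^ 2 * u 2 + u 3, ω * u 0 + u 1 + ω * u 2 + u 3))
  map_add' u v := by
    ext <;> simp only [Pi.add_apply, Prod.fst_add, Prod.snd_add] <;> ring
  map_smul' r u := by
    ext <;> simp only [Pi.smul_apply, smul_eq_mul, RingHom.id_apply, Prod.smul_fst,
      Prod.smul_snd] <;> ring

def ofU4Pair (ω : R) : (R × R) × (R × R) →ₗ[R] (Fin 4 → R) where
  toFun v := ![ω * v.1.1 + ω ^ 2 * v.1.2 + ω ^ 2 * v.2.1 + v.2.2,
    ω ^ 2 * v.1.1 + ω ^ 2 * v.1.2 + ω * v.2.1 + ω * v.2.2,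
    ω * v.1.1 + ω ^ 2 * v.2.1,
    ω ^ 2 * v.1.1 + ω * v.1.2 + ω * v.2.1 + v.2.2]
  map_add' u v := by
    ext i; fin_cases i <;> simp only [Pi.add_apply, Prod.fst_add, Prod.snd_add,
      Fin.zero_eta, Fin.mk_one, Fin.reduceFinMk, Matrix.cons_val] <;> ring
  map_smul' r u := by
    ext i; fin_cases i <;> simp only [Pi.smul_apply, smul_eq_mul, RingHom.id_apply,
      Prod.smul_fst, Prod.smul_snd, Fin.zero_eta, Fin.mk_one, Fin.reduceFinMk,
      Matrix.cons_val] <;> ring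

variable [CharP R 2] {ω : R}

theorem toU4Pair_ofU4Pair (hω : ω ^ 2 + ω + 1 = 0) (v : (R × R) × (R × R)) :
    toU4Pair ω (ofU4Pair ω v) = v := by
  ext <;> simp only [toU4Pair, ofU4Pair, LinearMap.coe_mk, AddHom.coe_mk,
    Matrix.cons_val] <;> grind

theorem ofU4Pair_toU4Pair (hω : ω ^ 2 + ω + 1 = 0) (u : Fin 4 → R) :
    ofU4Pair ω (toU4Pair ω u) = u := by
  ext i; fin_cases i <;> simp only [toU4Pair, ofU4Pair, LinearMap.coe_mk, AddHom.coe_mk,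
    Fin.zero_eta, Fin.mk_one, Fin.reduceFinMk, Matrix.cons_val] <;> grind

def u8EquivU4Pair (hω : ω ^ 2 + ω + 1 = 0) : (Fin 4 → R) ≃ₗ[R] (R × R) × (R × R) :=
  LinearEquiv.ofLinearMap (toU4Pair ω) (ofU4Pair ω)
    (LinearMap.ext (toU4Pair_ofU4Pair hω)) (LinearMap.ext (ofU4Pair_toU4Pair hω))

theorem toU4Pair_b8 (hω : ω ^ 2 + ω + 1 = 0) (u : Fin 4 → R) :
    toU4Pair ω (b8 u) = Prod.map (b4 ω) (b4 ω) (toU4Pair ω u) := by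
  ext <;> simp only [toU4Pair, b8, b4, LinearMap.coe_mk, AddHom.coe_mk, Prod.map_apply,
    Matrix.cons_val] <;> grind

end U4Pair

theorem gam_sq_add_gam_add_one : gam ^ 2 + gam + 1 = 0 := by
  have h := Ideal.Quotient.eq_zero_iff_mem.mpr
    (Ideal.mem_span_singleton_self (1 + X + X ^ 2 : (ZMod 2)[X]))
  rw [← h, gam]
  simp only [map_add, map_pow, map_one]
  ring

instance : Nontrivial F4 := by
  refine Ideal.Quotient.nontrivial_iff.mpr ?_
  rw [Ne, Ideal.span_singleton_eq_top]
  intro h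
  have h0 := natDegree_eq_zero_of_isUnit h
  have h2 : (1 + X + X ^ 2 : (ZMod 2)[X]).natDegree = 2 := by compute_degree!
  omega

instance : CharP F4 2 := charP_of_injective_algebraMap (algebraMap (ZMod 2) F4).injective 2

/-- `U₈ = F₄ ⊕ F₄x ⊕ F₄x² ⊕ F₄x³` with `c` acting diagonally by multiplication
by `γ` and `b` acting as the cyclic permutation `(1, x, x², x³)` (twisted by
Frobenius, by the relation `bc = c²b`) decomposes as `U₈ ≅ U₄ ⊕ U₄`, where `U₄`
is the faithful 4-dimensional representation on `F₄ ⊕ F₄x` with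
`b·(u,v) = (u² + v², γ·v²)`. -/
theorem stmt_16 :
    ∃ e : (Fin 4 → F4) ≃ₗ[ZMod 2] (F4 × F4) × (F4 × F4),
      (∀ u : Fin 4 → F4,
        e (fun i => gam * u i) =
          ((gam * (e u).1.1, gam * (e u).1.2),
           (gam * (e u).2.1, gam * (e u).2.2))) ∧
      (∀ u : Fin 4 → F4,
        e ![(u 3) ^ 2, (u 0) ^ 2, (u 1) ^ 2, (u 2) ^ 2] =
          (((e u).1.1 ^ 2 + (e u).1.2 ^ 2, gam * (e u).1.2 ^ 2),
           ((e u).2.1 ^ 2 + (e u).2.2 ^ 2, gam * (e u).2.2 ^ 2))) :=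
  ⟨(u8EquivU4Pair gam_sq_add_gam_add_one).restrictScalars (ZMod 2),
    fun u => (toU4Pair gam).map_smul gam u,
    toU4Pair_b8 gam_sq_add_gam_add_one⟩
end

section
/- Every faithful F₂-representation V of Γ_Δ with V^{C₃} = 0 and dim V > 2 contains a subrepresentation isomorphic to U₄; in particular, no faithful representation with V^{C₃} = 0 of dimension strictly greater than 4 is indecomposable. -/
open Polynomial

set_option synthInstance.maxHeartbeats 400000
set_option maxHeartbeats 1000000

private lemma F4_two : (2 : F4) = 0 := by
  have h1 : (2 : (ZMod 2)[X]) = C 2 := (map_ofNat C 2).symm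
  have h2 : (2 : ZMod 2) = 0 := rfl
  calc (2 : F4) = Ideal.Quotient.mk _ (2 : (ZMod 2)[X]) := (map_ofNat _ 2).symm
    _ = 0 := by rw [h1, h2, map_zero, map_zero]

private lemma gam_rel : gam * gam + gam + 1 = 0 := by
  unfold gam
  rw [← map_mul, ← map_one (Ideal.Quotient.mk _), ← map_add, ← map_add,
    Ideal.Quotient.eq_zero_iff_mem]
  exact Ideal.subset_span (by rw [Set.mem_singleton_iff]; ring)

private lemma gam_sq : gam ^ 2 = gam + 1 := by
  linear_combination gam_rel - (gam + 1) * F4_two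

private lemma gam_cube : gam ^ 3 = 1 := by
  linear_combination (gam - 1) * gam_rel

private lemma qp_deg : (1 + X + X ^ 2 : (ZMod 2)[X]).degree = 2 := by compute_degree!

private lemma mk_eq_zero_of_deg {p : (ZMod 2)[X]} (hp : p.degree < 2)
    (h : Ideal.Quotient.mk (Ideal.span {(1 + X + X ^ 2 : (ZMod 2)[X])}) p = 0) :
    p = 0 := by
  rw [Ideal.Quotient.eq_zero_iff_mem, Ideal.mem_span_singleton] at h
  by_contra hp0
  have h2 := Polynomial.degree_le_of_dvd h hp0
  rw [qp_deg] at h2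
  exact absurd (lt_of_le_of_lt h2 hp) (lt_irrefl _)

private lemma two_pos_deg : (0 : WithBot ℕ) < 2 := by decide

private lemma F4_one_ne_zero : (1 : F4) ≠ 0 := by
  intro h
  have := mk_eq_zero_of_deg (p := 1)
    (lt_of_le_of_lt Polynomial.degree_one_le two_pos_deg) ((map_one _).trans h)
  exact one_ne_zero this

private lemma gam_ne_zero : gam ≠ 0 := by
  intro h
  have := mk_eq_zero_of_deg (p := X)
    (lt_of_le_of_lt Polynomial.degree_X_le (by exact_mod_cast Nat.one_lt_two)) h
  exact Polynomial.X_ne_zero this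

private lemma mkX : Ideal.Quotient.mk (Ideal.span {(1 + X + X ^ 2 : (ZMod 2)[X])}) X = gam := rfl

private lemma F4_cases (z : F4) : z = 0 ∨ z = 1 ∨ z = gam ∨ z = gam + 1 := by
  obtain ⟨p, rfl⟩ := Ideal.Quotient.mk_surjective z
  have hq : (1 + X + X ^ 2 : (ZMod 2)[X]).Monic := by monicity!
  have hmod : Ideal.Quotient.mk (Ideal.span {(1 + X + X ^ 2 : (ZMod 2)[X])}) p
      = Ideal.Quotient.mk _ (p %ₘ (1 + X + X ^ 2)) := by
    conv_lhs => rw [← Polynomial.modByMonic_add_div p (1 + X + X ^ 2)]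
    rw [map_add, map_mul]
    simp [Ideal.Quotient.eq_zero_iff_mem, Ideal.subset_span, Set.mem_singleton_iff]
  have hdeg : (p %ₘ (1 + X + X ^ 2)).degree < 2 := by
    have := Polynomial.degree_modByMonic_lt p hq
    rwa [qp_deg] at this
  set r := p %ₘ (1 + X + X ^ 2) with hr
  have hle : r.degree ≤ 1 := by
    by_cases h0 : r = 0
    · simp [h0]
    · rw [Polynomial.degree_eq_natDegree h0] at hdeg ⊢
      have : r.natDegree < 2 := by exact_mod_cast hdeg
      exact_mod_cast Nat.lt_succ_iff.mp this
  have hr1 : r = C (r.coeff 1) * X + C (r.coeff 0) :=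
    Polynomial.eq_X_add_C_of_degree_le_one hle
  rw [hmod, hr1]
  have hz : ∀ c : ZMod 2, c = 0 ∨ c = 1 := by decide
  rcases hz (r.coeff 1) with h|h <;> rcases hz (r.coeff 0) with h'|h'
  · left; rw [h, h', C_0, zero_mul, zero_add, map_zero]
  · right; left; rw [h, h', C_0, C_1, zero_mul, zero_add, map_one]
  · right; right; left; rw [h, h', C_1, C_0, one_mul, add_zero, mkX]
  · right; right; right; rw [h, h', C_1, one_mul, map_add, map_one, mkX]

private lemma F4_add_self (z : F4) : z + z = 0 := by
  linear_combination z * F4_two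

private lemma F4_inv {z : F4} (hz : z ≠ 0) : z * z ^ 2 = 1 := by
  rcases F4_cases z with rfl|rfl|rfl|rfl
  · exact absurd rfl hz
  · ring
  · linear_combination (gam - 1) * gam_rel
  · linear_combination (gam + 2) * gam_rel - F4_two

private lemma F4_quad (l : F4) : l ^ 2 + gam * l + 1 ≠ 0 := by
  rcases F4_cases l with rfl|rfl|rfl|rfl
  · intro h; exact F4_one_ne_zero (by linear_combination h)
  · intro h; exact gam_ne_zero (by linear_combination h - F4_two)
  · intro h; exact F4_one_ne_zero (by linear_combination h - gam ^ 2 * F4_two)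
  · intro h; exact gam_ne_zero (by linear_combination h - 2 * gam_rel)

private lemma F4_decomp (z : F4) : ∃ a b : ZMod 2, z = a • (1 : F4) + b • gam := by
  rcases F4_cases z with rfl|rfl|rfl|rfl
  · exact ⟨0, 0, by simp⟩
  · exact ⟨1, 0, by simp⟩
  · exact ⟨0, 1, by simp⟩
  · exact ⟨1, 1, by simp [add_comm]⟩

private lemma F4_smul (a : ZMod 2) (z : F4) :
    a • z = Ideal.Quotient.mk (Ideal.span {(1 + X + X ^ 2 : (ZMod 2)[X])}) (C a) * z := by
  exact (Algebra.smul_def a z).trans (by rfl)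

private lemma F4_indep {a b : ZMod 2} (h : a • (1 : F4) + b • gam = 0) :
    a = 0 ∧ b = 0 := by
  rw [F4_smul, F4_smul, mul_one] at h
  rw [show (gam : F4) = Ideal.Quotient.mk _ X from rfl, ← map_mul, ← map_add] at h
  have h0 := mk_eq_zero_of_deg (p := C a + C b * X) (by
    apply lt_of_le_of_lt (show (C a + C b * X : (ZMod 2)[X]).degree ≤ 1 by compute_degree)
    decide) h
  constructor
  · have := congrArg (fun p => Polynomial.coeff p 0) h0; simpa using this
  · have := congrArg (fun p => Polynomial.coeff p 1) h0; simpa using this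

private lemma pg_rel {r : FreeGroup (Fin 2)} (hr : r ∈ sdRels) :
    PresentedGroup.mk sdRels r = 1 :=
  (QuotientGroup.eq_one_iff r).mpr (Subgroup.subset_normalClosure hr)

private lemma pg_c3 : (PresentedGroup.of (rels := sdRels) 0) ^ 3 = 1 := by
  rw [show (PresentedGroup.of (rels := sdRels) 0) = PresentedGroup.mk sdRels (FreeGroup.of 0)
    from rfl, ← map_pow]
  exact pg_rel (by left; rfl)

private lemma pg_b4 : (PresentedGroup.of (rels := sdRels) 1) ^ 4 = 1 := by
  rw [show (PresentedGroup.of (rels := sdRels) 1) = PresentedGroup.mk sdRels (FreeGroup.of 1)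
    from rfl, ← map_pow]
  exact pg_rel (by right; left; rfl)

private lemma pg_bc : PresentedGroup.of (rels := sdRels) 1 * PresentedGroup.of 0
    = PresentedGroup.of (rels := sdRels) 0 ^ 2 * PresentedGroup.of 1 := by
  have h := pg_rel (r := FreeGroup.of 1 * FreeGroup.of 0 * (FreeGroup.of 0 ^ 2 * FreeGroup.of 1)⁻¹)
    (by right; right; rfl)
  rw [map_mul, map_inv, map_mul, map_mul, map_pow] at h
  exact mul_inv_eq_one.mp h

private lemma pg_b2_ne_one : (PresentedGroup.of (rels := sdRels) 1) ^ 2 ≠ 1 := by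
  have hrels : ∀ r ∈ sdRels,
      FreeGroup.lift (fun i : Fin 2 => if i = 0 then (1 : Multiplicative (ZMod 4))
        else Multiplicative.ofAdd 1) r = 1 := by
    intro r hr
    rcases hr with rfl | rfl | rfl <;> simp [map_pow, map_mul, map_inv] <;> decide
  intro h
  have := congrArg (PresentedGroup.toGroup hrels) h
  simp only [map_pow, map_one, PresentedGroup.toGroup.of] at this
  revert this; decide

/-- Every faithful `F₂`-representation `V` of `Γ_Δ` with `V^{C₃} = 0` and
`dim V > 2` contains a subrepresentation isomorphic to `U₄` (the faithful
4-dimensional representation on `F₄ ⊕ F₄x` with `c` acting by multiplication and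
`b·(u,v) = (u²+v², γv²)`); in particular if moreover `dim V > 4` then `V` is not
indecomposable. -/
theorem stmt_17 (V : Type) [AddCommGroup V] [Module (ZMod 2) V]
    [FiniteDimensional (ZMod 2) V]
    (ρ : Representation (ZMod 2) (PresentedGroup sdRels) V)
    (hfaithful : Function.Injective ρ)
    (hfree : ∀ v, ρ (PresentedGroup.of 0) v = v → v = 0)
    (hdim : 2 < Module.finrank (ZMod 2) V) :
    (∃ f : (F4 × F4) →ₗ[ZMod 2] V, Function.Injective f ∧
      (∀ w : F4 × F4,
        ρ (PresentedGroup.of 0) (f w) = f (gam * w.1, gam * w.2)) ∧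
      (∀ w : F4 × F4,
        ρ (PresentedGroup.of 1) (f w) =
          f (w.1 ^ 2 + w.2 ^ 2, gam * w.2 ^ 2))) ∧
    (4 < Module.finrank (ZMod 2) V →
      ∃ p q : Submodule (ZMod 2) V,
        (∀ g, ∀ v ∈ p, ρ g v ∈ p) ∧ (∀ g, ∀ v ∈ q, ρ g v ∈ q) ∧
        IsCompl p q ∧ p ≠ ⊥ ∧ q ≠ ⊥) := by
  set Cop : Module.End (ZMod 2) V := ρ (PresentedGroup.of 0) with hCopdef
  set Top : Module.End (ZMod 2) V := ρ (PresentedGroup.of 1) with hTopdef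
  -- characteristic two facts
  have h2 : ∀ a : V, a + a = 0 := fun a => by
    rw [← two_smul (ZMod 2) a, show (2 : ZMod 2) = 0 from rfl, zero_smul]
  have hcan : ∀ a b : V, a + b = 0 → a = b := fun a b h =>
    add_right_cancel (h.trans (h2 b).symm)
  have hmove : ∀ a b c : V, a + b = c → a = c + b := by
    intro a b c h
    rw [← h, add_assoc, h2, add_zero]
  -- operator relations
  have hC3 : Cop ^ 3 = 1 := by rw [hCopdef, ← map_pow, pg_c3, map_one]
  have hT4 : Top ^ 4 = 1 := by rw [hTopdef, ← map_pow, pg_b4, map_one]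
  have hTCop : Top * Cop = Cop ^ 2 * Top := by
    rw [hCopdef, hTopdef, ← map_mul, ← map_pow, ← map_mul, pg_bc]
  have hC3v : ∀ v, Cop (Cop (Cop v)) = v := by
    intro v
    have := LinearMap.ext_iff.mp hC3 v
    simpa [pow_succ, Module.End.mul_apply] using this
  have hT4v : ∀ v, Top (Top (Top (Top v))) = v := by
    intro v
    have := LinearMap.ext_iff.mp hT4 v
    simpa [pow_succ, Module.End.mul_apply] using this
  have hTCv : ∀ v, Top (Cop v) = Cop (Cop (Top v)) := by
    intro v
    have := LinearMap.ext_iff.mp hTCop v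
    simpa [pow_succ, Module.End.mul_apply] using this
  have hTC2v : ∀ v, Top (Cop (Cop v)) = Cop (Top v) := by
    intro v
    rw [hTCv (Cop v), hTCv v, hC3v (Top v)]
  -- the quadratic relation for Cop
  have hCCv : ∀ v, Cop (Cop v) = Cop v + v := by
    intro v
    apply hcan
    apply hfree
    rw [map_add, map_add]
    have h3 := hC3v v
    calc Cop (Cop (Cop v)) + (Cop (Cop v) + Cop v) = v + (Cop (Cop v) + Cop v) := by rw [h3]
      _ = Cop (Cop v) + (Cop v + v) := by abel
  have hCsq : Cop ^ 2 = Cop + 1 := by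
    ext v
    simpa [pow_succ, Module.End.mul_apply] using hCCv v
  have h2E : ∀ g : Module.End (ZMod 2) V, g + g = 0 := fun g => LinearMap.ext fun v => by
    simpa using h2 (g v)
  have hq0 : Polynomial.aeval Cop (1 + X + X ^ 2 : (ZMod 2)[X]) = 0 := by
    simp only [map_add, map_one, map_pow, Polynomial.aeval_X]
    rw [hCsq]
    calc (1 : Module.End (ZMod 2) V) + Cop + (Cop + 1) = (Cop + Cop) + (1 + 1) := by abel
      _ = 0 := by rw [h2E, h2E, add_zero]
  -- the F4-action A
  set A : F4 →+* Module.End (ZMod 2) V :=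
    Ideal.Quotient.lift (Ideal.span {(1 + X + X ^ 2 : (ZMod 2)[X])})
      (Polynomial.aeval Cop).toRingHom (by
        intro a ha
        rw [Ideal.mem_span_singleton] at ha
        obtain ⟨c, rfl⟩ := ha
        rw [map_mul]
        have h0 : (Polynomial.aeval Cop).toRingHom (1 + X + X ^ 2 : (ZMod 2)[X]) = 0 := hq0
        rw [h0, zero_mul]) with hAdef
  have hA : ∀ p : (ZMod 2)[X], A (Ideal.Quotient.mk _ p) = Polynomial.aeval Cop p := by
    intro p
    rw [hAdef]
    exact Ideal.Quotient.lift_mk _ _ _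
  have hAgam : A gam = Cop := by
    rw [show gam = Ideal.Quotient.mk _ X from rfl, hA, Polynomial.aeval_X]
  have hA1v : ∀ v, A 1 v = v := fun v => by rw [map_one]; rfl
  have hAmulv : ∀ (u u' : F4) (v : V), A (u * u') v = A u (A u' v) := by
    intro u u' v
    rw [map_mul]
    rfl
  have hAaddv : ∀ (u u' : F4) (v : V), A (u + u') v = A u v + A u' v := by
    intro u u' v
    rw [map_add]
    rfl
  have hAsm : ∀ (a : ZMod 2) (u : F4) (v : V), A (a • u) v = a • A u v := by
    intro a u v
    have hcases : ∀ a : ZMod 2, a = 0 ∨ a = 1 := by decide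
    rcases hcases a with rfl | rfl
    · simp
    · simp
  have hgam1sq : (gam + 1) ^ 2 = gam := by linear_combination gam_rel
  -- semilinearity of Top
  have hsemi : ∀ (u : F4) (v : V), Top (A u v) = A (u ^ 2) (Top v) := by
    intro u v
    rcases F4_cases u with rfl | rfl | rfl | rfl
    · simp
    · simp only [one_pow]
      rw [hA1v, hA1v]
    · rw [hAgam, gam_sq, hAaddv, hAgam, hA1v, hTCv, hCCv]
    · rw [hgam1sq, hAaddv, hAgam, hA1v, map_add, hTCv, hCCv, add_assoc, h2, add_zero]
  -- T² ≠ 1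
  obtain ⟨y, hy⟩ : ∃ y : V, Top (Top y) ≠ y := by
    by_contra hcon
    push_neg at hcon
    apply pg_b2_ne_one
    apply hfaithful
    rw [map_pow, map_one]
    ext v
    simpa [pow_succ, Module.End.mul_apply] using hcon v
  -- construction of e and x
  have hfact : ∀ z : V, Top (Top z + Cop (Cop z)) + Cop (Top z + Cop (Cop z))
      = Top (Top z) + z := by
    intro z
    rw [map_add, map_add, hTC2v, hC3v]
    calc Top (Top z) + Cop (Top z) + (Cop (Top z) + z)
        = Top (Top z) + z + (Cop (Top z) + Cop (Top z)) := by abel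
      _ = Top (Top z) + z := by rw [h2, add_zero]
  obtain ⟨z, hz0, hz1⟩ : ∃ z : V,
      Top (Top z) + z ≠ 0 ∧ Top (Top (Top z) + z) = Top (Top z) + z := by
    by_cases hfix : Top (Top (Top y) + y) = Top (Top y) + y
    · exact ⟨y, fun h => hy (hcan _ _ h), hfix⟩
    · refine ⟨Top y + y, ?_, ?_⟩
      · have hrw : Top (Top (Top y + y)) + (Top y + y)
            = Top (Top (Top y) + y) + (Top (Top y) + y) := by
          rw [map_add, map_add, map_add]
          abel
        rw [hrw]
        intro h
        exact hfix (hcan _ _ h)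
      · have hrw : Top (Top (Top y + y)) + (Top y + y)
            = Top (Top (Top y) + y) + (Top (Top y) + y) := by
          rw [map_add, map_add, map_add]
          abel
        rw [hrw, map_add]
        have hT2w : Top (Top (Top (Top y) + y)) = Top (Top y) + y := by
          rw [map_add, map_add, hT4v]
          abel
        rw [hT2w]
        abel
  obtain ⟨e, x, he0, hTe, hTx⟩ : ∃ e x : V, e ≠ 0 ∧ Top e = e ∧ Top x = e + Cop x := by
    refine ⟨Top (Top z) + z, Top z + Cop (Cop z), hz0, hz1, ?_⟩
    exact hmove _ _ _ (hfact z)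
  clear hz0 hz1
  -- the map f
  set f : (F4 × F4) →ₗ[ZMod 2] V :=
    { toFun := fun w => A w.1 e + A w.2 x
      map_add' := by
        intro w1 w2
        show A (w1.1 + w2.1) e + A (w1.2 + w2.2) x = _
        rw [hAaddv, hAaddv]
        abel
      map_smul' := by
        intro a w
        show A (a • w.1) e + A (a • w.2) x = a • (A w.1 e + A w.2 x)
        rw [hAsm, hAsm, smul_add] } with hfdef
  have hfval : ∀ u v : F4, f (u, v) = A u e + A v x := fun u v => rfl
  -- property for c
  have hpropc : ∀ w : F4 × F4, Cop (f w) = f (gam * w.1, gam * w.2) := by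
    intro w
    rw [show f w = A w.1 e + A w.2 x from rfl, hfval, map_add, hAmulv, hAmulv, hAgam]
  -- property for b
  have hpropb : ∀ w : F4 × F4, Top (f w) = f (w.1 ^ 2 + w.2 ^ 2, gam * w.2 ^ 2) := by
    intro w
    rw [show f w = A w.1 e + A w.2 x from rfl, hfval, map_add, hsemi, hsemi, hTe, hTx,
      hAaddv]
    have h1 : A (w.2 ^ 2) (e + Cop x) = A (w.2 ^ 2) e + A (gam * w.2 ^ 2) x := by
      rw [map_add]
      have h2' : A (w.2 ^ 2) (Cop x) = A (gam * w.2 ^ 2) x := by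
        rw [mul_comm, hAmulv, hAgam]
      rw [h2']
    rw [h1]
    abel
  -- injectivity
  have hkey : ∀ u v : F4, A u e + A v x = 0 → u = 0 ∧ v = 0 := by
    intro u v huv
    have hnz : ∀ m : F4, m ≠ 0 → A m e = 0 → False := by
      intro m hm hme
      apply he0
      rw [← hA1v e, ← F4_inv hm, mul_comm, hAmulv, hme, map_zero]
    by_cases hv : v = 0
    · subst hv
      rw [map_zero, LinearMap.zero_apply, add_zero] at huv
      refine ⟨?_, rfl⟩
      by_contra hu
      exact hnz u hu huv
    · exfalso
      set l : F4 := u * v ^ 2 with hldef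
      have hxl : x = A l e := by
        have h1 := congrArg (A (v ^ 2)) huv
        rw [map_add, map_zero] at h1
        have h2' : A (v ^ 2) (A u e) = A l e := by rw [← hAmulv, mul_comm]
        have h3' : A (v ^ 2) (A v x) = x := by
          rw [← hAmulv, show v ^ 2 * v = v * v ^ 2 from mul_comm _ _, F4_inv hv, hA1v]
        rw [h2', h3'] at h1
        exact (hcan _ _ h1).symm
      have hmu : A (l ^ 2 + gam * l + 1) e = 0 := by
        have hTxl : Top x = A (l ^ 2) e := by
          rw [hxl, hsemi, hTe]
        have hgaml : (A (gam * l)) e = Cop ((A l) e) := by rw [hAmulv, hAgam]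
        have hTxl2 : Top x = e + A (gam * l) e := by
          rw [hTx, hxl, hgaml]
        have h4 : A (l ^ 2) e = e + A (gam * l) e := by rw [← hTxl, hTxl2]
        rw [hAaddv, hAaddv, hA1v, h4]
        calc e + A (gam * l) e + A (gam * l) e + e
            = (e + e) + (A (gam * l) e + A (gam * l) e) := by abel
          _ = 0 := by rw [h2, h2, add_zero]
      exact hnz _ (F4_quad l) hmu
  have hfinj : Function.Injective f := by
    intro w1 w2 hw
    have h0 : f (w1 - w2) = 0 := by rw [map_sub, hw, sub_self]
    have hk := hkey (w1 - w2).1 (w1 - w2).2 h0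
    have hsub : w1 - w2 = 0 := Prod.ext hk.1 hk.2
    exact sub_eq_zero.mp hsub
  refine ⟨⟨f, hfinj, hpropc, hpropb⟩, ?_⟩
  -- Part 2
  intro hdim4
  set U : Submodule (ZMod 2) V := LinearMap.range f with hUdef
  have hmemU : ∀ u v : F4, A u e + A v x ∈ U := fun u v => ⟨(u, v), rfl⟩
  have heU : e ∈ U := by
    have h := hmemU 1 0
    rwa [hA1v, map_zero, LinearMap.zero_apply, add_zero] at h
  have hxU : x ∈ U := by
    have h := hmemU 0 1
    rwa [hA1v, map_zero, LinearMap.zero_apply, zero_add] at h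
  have hCU : ∀ v ∈ U, Cop v ∈ U := by
    rintro _ ⟨w, rfl⟩
    rw [hpropc]
    exact ⟨_, rfl⟩
  have hTU : ∀ v ∈ U, Top v ∈ U := by
    rintro _ ⟨w, rfl⟩
    rw [hpropb]
    exact ⟨_, rfl⟩
  -- the nilpotent operator N
  set N : Module.End (ZMod 2) V := Top + 1 with hNdef
  have hNv : ∀ v, N v = Top v + v := fun v => rfl
  have hN2v : ∀ v, N (N v) = Top (Top v) + v := by
    intro v
    rw [hNv, hNv, map_add]
    calc Top (Top v) + Top v + (Top v + v) = Top (Top v) + v + (Top v + Top v) := by abel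
      _ = Top (Top v) + v := by rw [h2, add_zero]
  have hN4v : ∀ v, N (N (N (N v))) = 0 := by
    intro v
    rw [hN2v (N (N v)), hN2v v, map_add, map_add, hT4v]
    calc v + Top (Top v) + (Top (Top v) + v)
        = (v + v) + (Top (Top v) + Top (Top v)) := by abel
      _ = 0 := by rw [h2, h2, add_zero]
  -- the four basis vectors of U
  have hNx : N x = e + Cop x + x := by rw [hNv, hTx]
  have hTCx : Top (Cop x) = Cop e + e + x := by
    rw [hTCv, hTx, map_add, map_add, hC3v, hCCv]
  have hT2x : Top (Top x) = Cop e + x := by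
    rw [hTx, map_add, hTe, hTCx]
    calc e + (Cop e + e + x) = Cop e + x + (e + e) := by abel
      _ = Cop e + x := by rw [h2, add_zero]
  have hN2x : N (N x) = Cop e := by
    rw [hN2v, hT2x, add_assoc, h2, add_zero]
  have hN3x : N (N (N x)) = e := by
    rw [hN2x, hNv, hTCv, hTe, hCCv]
    calc Cop e + e + Cop e = e + (Cop e + Cop e) := by abel
      _ = e := by rw [h2, add_zero]
  have hNxU : N x ∈ U := by
    rw [hNx]
    have h := hmemU 1 (gam + 1)
    rw [hA1v, hAaddv, hAgam, hA1v] at h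
    rwa [← add_assoc] at h
  have hN2xU : N (N x) ∈ U := by
    rw [hN2x]
    have h := hmemU gam 0
    rwa [map_zero, LinearMap.zero_apply, add_zero, hAgam] at h
  have hCxspan : Cop x = N x + e + x := by
    rw [hNx]
    calc Cop x = Cop x + (e + e) + (x + x) := by rw [h2, h2, add_zero, add_zero]
      _ = e + Cop x + x + e + x := by abel
  -- U is spanned by x, Nx, N²x, e
  have hfw : ∀ w : F4 × F4, ∀ a b c d : ZMod 2, w.1 = a • 1 + b • gam →
      w.2 = c • 1 + d • gam →
      f w = a • e + b • Cop e + (c • x + d • Cop x) := by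
    intro w a b c d hab hcd
    show A w.1 e + A w.2 x = _
    rw [hab, hcd, hAaddv, hAaddv, hAsm, hAsm, hAsm, hAsm, hA1v, hA1v, hAgam]
  have hUle : ∀ v ∈ U, v ∈ Submodule.span (ZMod 2) (Set.range ![x, N x, N (N x), e]) := by
    rintro _ ⟨w, rfl⟩
    obtain ⟨a, b, hab⟩ := F4_decomp w.1
    obtain ⟨c, d, hcd⟩ := F4_decomp w.2
    rw [hfw w a b c d hab hcd]
    have mx : x ∈ Submodule.span (ZMod 2) (Set.range ![x, N x, N (N x), e]) :=
      Submodule.subset_span ⟨0, rfl⟩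
    have mNx : N x ∈ Submodule.span (ZMod 2) (Set.range ![x, N x, N (N x), e]) :=
      Submodule.subset_span ⟨1, rfl⟩
    have mN2x : N (N x) ∈ Submodule.span (ZMod 2) (Set.range ![x, N x, N (N x), e]) :=
      Submodule.subset_span ⟨2, rfl⟩
    have me : e ∈ Submodule.span (ZMod 2) (Set.range ![x, N x, N (N x), e]) :=
      Submodule.subset_span ⟨3, rfl⟩
    have mCe : Cop e ∈ Submodule.span (ZMod 2) (Set.range ![x, N x, N (N x), e]) := by
      rw [← hN2x]; exact mN2x
    have mCx : Cop x ∈ Submodule.span (ZMod 2) (Set.range ![x, N x, N (N x), e]) := by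
      rw [hCxspan]
      exact Submodule.add_mem _ (Submodule.add_mem _ mNx me) mx
    exact Submodule.add_mem _
      (Submodule.add_mem _ (Submodule.smul_mem _ _ me) (Submodule.smul_mem _ _ mCe))
      (Submodule.add_mem _ (Submodule.smul_mem _ _ mx) (Submodule.smul_mem _ _ mCx))
  -- e is not in the span of x, Nx, N²x
  have hf10 : f (1, 0) = e := by
    rw [hfval, hA1v, map_zero, LinearMap.zero_apply, add_zero]
  have hnotmem : e ∉ Submodule.span (ZMod 2) (Set.range ![x, N x, N (N x)]) := by
    intro hmem
    obtain ⟨c, hc⟩ := (Submodule.mem_span_range_iff_exists_fun (ZMod 2)).mp hmem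
    rw [Fin.sum_univ_three] at hc
    simp only [Matrix.cons_val_zero, Matrix.cons_val_one, Matrix.head_cons,
      Matrix.cons_val_two, Matrix.tail_cons] at hc
    have heq : f (c 1 • 1 + c 2 • gam, c 0 • 1 + c 1 • (gam + 1)) = f (1, 0) := by
      rw [hf10, hfval, hAaddv, hAaddv, hAsm, hAsm, hAsm, hAsm, hA1v, hA1v, hAgam]
      have hA1gam : A (gam + 1) x = Cop x + x := by
        rw [hAaddv, hAgam, hA1v]
      rw [hA1gam]
      rw [hN2x, hNx] at hc
      calc c 1 • e + c 2 • Cop e + (c 0 • x + c 1 • (Cop x + x))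
          = c 0 • x + c 1 • (e + Cop x + x) + c 2 • Cop e := by module
        _ = e := hc
    have hpair := hfinj heq
    rw [Prod.mk.injEq] at hpair
    obtain ⟨hfst, hsnd⟩ := hpair
    have hsnd' : (c 0 + c 1) • (1 : F4) + c 1 • gam = 0 := by
      rw [← hsnd]
      module
    obtain ⟨hc01, hc1⟩ := F4_indep hsnd'
    have hc0 : c 0 = 0 := by
      rwa [hc1, add_zero] at hc01
    rw [hc1, zero_smul, zero_add] at hfst
    have hone : (1 : ZMod 2) • (1 : F4) + c 2 • gam = 0 := by
      rw [one_smul, hfst, F4_add_self]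
    have := (F4_indep hone).1
    exact absurd this (by decide)
  -- the functional φ
  obtain ⟨φ, hφx, hφNx, hφN2x, hφe⟩ : ∃ φ : V →ₗ[ZMod 2] ZMod 2,
      φ x = 0 ∧ φ (N x) = 0 ∧ φ (N (N x)) = 0 ∧ φ e = 1 := by
    set U3 := Submodule.span (ZMod 2) (Set.range ![x, N x, N (N x)]) with hU3
    have hq : U3.mkQ e ≠ 0 := by
      rw [Submodule.mkQ_apply, ne_eq, Submodule.Quotient.mk_eq_zero]
      exact hnotmem
    obtain ⟨ψ, hψ⟩ : ∃ ψ : Module.Dual (ZMod 2) (V ⧸ U3), ψ (U3.mkQ e) ≠ 0 := by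
      by_contra hcon
      push_neg at hcon
      exact hq ((Module.forall_dual_apply_eq_zero_iff (ZMod 2) _).mp hcon)
    have hker : ∀ v, v ∈ U3 → ψ.comp U3.mkQ v = 0 := by
      intro v hv
      rw [LinearMap.comp_apply, Submodule.mkQ_apply,
        (Submodule.Quotient.mk_eq_zero _).mpr hv, map_zero]
    refine ⟨ψ.comp U3.mkQ, hker _ (Submodule.subset_span ⟨0, rfl⟩),
      hker _ (Submodule.subset_span ⟨1, rfl⟩), hker _ (Submodule.subset_span ⟨2, rfl⟩), ?_⟩
    rcases (by decide : ∀ z : ZMod 2, z = 0 ∨ z = 1) (ψ.comp U3.mkQ e) with h | h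
    · exact absurd h hψ
    · exact h
  -- the projection π
  set π : Module.End (ZMod 2) V :=
    (φ ∘ₗ (N ∘ₗ N ∘ₗ N)).smulRight x + (φ ∘ₗ (N ∘ₗ N)).smulRight (N x)
      + (φ ∘ₗ N).smulRight (N (N x)) + φ.smulRight e with hπdef
  have hπv : ∀ v, π v = φ (N (N (N v))) • x + φ (N (N v)) • N x
      + φ (N v) • N (N x) + φ v • e := by
    intro v
    rw [hπdef]
    simp [LinearMap.add_apply, LinearMap.smulRight_apply, LinearMap.comp_apply]
  have hπx : π x = x := by
    rw [hπv, hN3x, hφe, hφN2x, hφNx, hφx, one_smul, zero_smul, zero_smul, zero_smul,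
      add_zero, add_zero, add_zero]
  have hNe : N e = 0 := by rw [hNv, hTe, h2]
  have hπN : ∀ v, π (N v) = N (π v) := by
    intro v
    rw [hπv (N v), hπv v, hN4v, map_zero, zero_smul, zero_add]
    rw [map_add, map_add, map_add, map_smul, map_smul, map_smul, map_smul, hN3x, hNe,
      smul_zero, add_zero]
  have hTN : ∀ v, Top v = N v + v := fun v => hmove _ _ _ (hNv v).symm
  have hπT : ∀ v, π (Top v) = Top (π v) := by
    intro v
    rw [hTN v, map_add, hπN, hTN (π v)]
  have hπUmem : ∀ v, π v ∈ U := by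
    intro v
    rw [hπv]
    exact Submodule.add_mem _
      (Submodule.add_mem _
        (Submodule.add_mem _ (Submodule.smul_mem _ _ hxU) (Submodule.smul_mem _ _ hNxU))
        (Submodule.smul_mem _ _ hN2xU))
      (Submodule.smul_mem _ _ heU)
  have hπe : π e = e := by
    rw [← hN3x, hπN, hπN, hπN, hπx, hN3x]
  have hπNx : π (N x) = N x := by rw [hπN, hπx]
  have hπCe : π (Cop e) = Cop e := by
    rw [← hN2x, hπN, hπN, hπx, hN2x]
  have hπCx : π (Cop x) = Cop x := by
    rw [hCxspan, map_add, map_add, hπNx, hπe, hπx]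
  have hπU : ∀ v ∈ U, π v = v := by
    rintro _ ⟨w, rfl⟩
    obtain ⟨a, b, hab⟩ := F4_decomp w.1
    obtain ⟨c, d, hcd⟩ := F4_decomp w.2
    rw [hfw w a b c d hab hcd, map_add, map_add, map_add, map_smul, map_smul, map_smul,
      map_smul, hπe, hπCe, hπx, hπCx]
  -- the averaged projection π'
  set π' : Module.End (ZMod 2) V :=
    π + (Cop ∘ₗ (π ∘ₗ (Cop ∘ₗ Cop))) + (Cop ∘ₗ (Cop ∘ₗ (π ∘ₗ Cop))) with hπ'def
  have hπ'v : ∀ v, π' v = π v + Cop (π (Cop (Cop v))) + Cop (Cop (π (Cop v))) := by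
    intro v
    rw [hπ'def]
    simp [LinearMap.add_apply, LinearMap.comp_apply]
  have hπ'mem : ∀ v, π' v ∈ U := by
    intro v
    rw [hπ'v]
    exact Submodule.add_mem _
      (Submodule.add_mem _ (hπUmem v) (hCU _ (hπUmem _))) (hCU _ (hCU _ (hπUmem _)))
  have hπ'id : ∀ v ∈ U, π' v = v := by
    intro v hv
    rw [hπ'v, hπU v hv, hπU _ (hCU _ (hCU _ hv)), hπU _ (hCU _ hv), hC3v]
    rw [add_assoc, h2, add_zero]
  have hπ'C : ∀ v, π' (Cop v) = Cop (π' v) := by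
    intro v
    rw [hπ'v (Cop v), hπ'v v, map_add, map_add, hC3v v, hC3v (π (Cop v))]
    abel
  have hπ'T : ∀ v, π' (Top v) = Top (π' v) := by
    intro v
    rw [hπ'v (Top v), hπ'v v, map_add, map_add, hπT v,
      hTCv (π (Cop (Cop v))), ← hπT (Cop (Cop v)), hTC2v v,
      hTC2v (π (Cop v)), ← hπT (Cop v), hTCv v]
    abel
  -- the complement
  have hdisj : Disjoint U (LinearMap.ker π') := by
    rw [Submodule.disjoint_def]
    intro v hvU hvK
    rw [← hπ'id v hvU]
    exact LinearMap.mem_ker.mp hvK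
  have hcodis : Codisjoint U (LinearMap.ker π') := by
    rw [codisjoint_iff, eq_top_iff]
    intro v _
    apply Submodule.mem_sup.mpr
    refine ⟨π' v, hπ'mem v, v + π' v, ?_, ?_⟩
    · rw [LinearMap.mem_ker, map_add, hπ'id _ (hπ'mem v), h2]
    · calc π' v + (v + π' v) = v + (π' v + π' v) := by abel
        _ = v := by rw [h2, add_zero]
  have hcompl : IsCompl U (LinearMap.ker π') := ⟨hdisj, hcodis⟩
  -- nontriviality
  have hpne : U ≠ ⊥ := by
    intro hbot
    rw [hbot] at heU
    exact he0 (Submodule.mem_bot _ |>.mp heU)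
  have hqne : LinearMap.ker π' ≠ ⊥ := by
    intro hbot
    have hUtop : U = ⊤ := by
      have := hcodis
      rw [hbot, codisjoint_iff, sup_bot_eq] at this
      exact this
    have hsp : Submodule.span (ZMod 2) (Set.range ![x, N x, N (N x), e]) = ⊤ := by
      rw [eq_top_iff]
      intro v _
      exact hUle v (hUtop ▸ Submodule.mem_top)
    have hle4 := finrank_le_of_span_eq_top hsp
    rw [Fintype.card_fin] at hle4
    omega
  -- stability under inverses
  have hinvC : (PresentedGroup.of (rels := sdRels) 0)⁻¹ = (PresentedGroup.of 0) ^ 2 := by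
    apply inv_eq_of_mul_eq_one_right
    rw [← pow_succ']
    exact pg_c3
  have hinvT : (PresentedGroup.of (rels := sdRels) 1)⁻¹ = (PresentedGroup.of 1) ^ 3 := by
    apply inv_eq_of_mul_eq_one_right
    rw [← pow_succ']
    exact pg_b4
  have stab : ∀ (W : Submodule (ZMod 2) V), (∀ v ∈ W, Cop v ∈ W) → (∀ v ∈ W, Top v ∈ W) →
      ∀ g, ∀ v ∈ W, ρ g v ∈ W := by
    intro W hCW hTW
    let S : Subgroup (PresentedGroup sdRels) :=
      { carrier := {g | (∀ v ∈ W, ρ g v ∈ W) ∧ (∀ v ∈ W, ρ g⁻¹ v ∈ W)}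
        one_mem' := by
          constructor <;> intro v hv <;>
            simp only [inv_one, map_one, Module.End.one_apply] <;> exact hv
        mul_mem' := by
          rintro g h ⟨hg1, hg2⟩ ⟨hh1, hh2⟩
          constructor
          · intro v hv
            rw [map_mul, Module.End.mul_apply]
            exact hg1 _ (hh1 _ hv)
          · intro v hv
            rw [mul_inv_rev, map_mul, Module.End.mul_apply]
            exact hh2 _ (hg2 _ hv)
        inv_mem' := by
          rintro g ⟨hg1, hg2⟩
          refine ⟨hg2, ?_⟩
          intro v hv
          rw [inv_inv]
          exact hg1 v hv }
    have hgen : Set.range (PresentedGroup.of (rels := sdRels)) ⊆ S := by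
      rintro _ ⟨i, rfl⟩
      have hfin : ∀ j : Fin 2, j = 0 ∨ j = 1 := by decide
      rcases hfin i with rfl | rfl
      · refine ⟨fun v hv => hCW v hv, fun v hv => ?_⟩
        rw [hinvC, map_pow, pow_two, Module.End.mul_apply]
        exact hCW _ (hCW _ hv)
      · refine ⟨fun v hv => hTW v hv, fun v hv => ?_⟩
        rw [hinvT, map_pow, pow_succ, pow_two, Module.End.mul_apply, Module.End.mul_apply]
        exact hTW _ (hTW _ (hTW _ hv))
    have hall : ∀ g : PresentedGroup sdRels, g ∈ S := by
      intro g
      have hle := (Subgroup.closure_le S).mpr hgen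
      apply hle
      rw [PresentedGroup.closure_range_of]
      exact Subgroup.mem_top g
    exact fun g v hv => (hall g).1 v hv
  have hCq : ∀ v ∈ LinearMap.ker π', Cop v ∈ LinearMap.ker π' := by
    intro v hv
    rw [LinearMap.mem_ker, hπ'C, LinearMap.mem_ker.mp hv, map_zero]
  have hTq : ∀ v ∈ LinearMap.ker π', Top v ∈ LinearMap.ker π' := by
    intro v hv
    rw [LinearMap.mem_ker, hπ'T, LinearMap.mem_ker.mp hv, map_zero]
  exact ⟨U, LinearMap.ker π', stab U hCU hTU, stab _ hCq hTq, hcompl, hpne, hqne⟩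
end
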